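/- arXiv:2412.13990 — 2 statements merged into one kernel-verified Lean document; each statement's English description precedes it below -/
import Mathlib

section
/- (Gradient-gap inequality) Let C be a nonzero real n×n matrix and let s(C) denote the sum of the singular values of C. Then for every X ∈ O(n): s(C) − Tr(C X) ≥ (1/(2·σmax(C))) · ‖skew(Xᵀ Cᵀ)‖_F². -/
open Matrix

noncomputable section

/-- Matrix exponential of a real square matrix. -/
def mexp {n : ℕ} (A : Matrix (Fin n) (Fin n) ℝ) : Matrix (Fin n) (Fin n) ℝ :=
  NormedSpace.exp A

/-- Skew-symmetric part: `skew M = (M - Mᵀ)/2`. -/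
def skewPart {n : ℕ} (M : Matrix (Fin n) (Fin n) ℝ) : Matrix (Fin n) (Fin n) ℝ :=
  (1 / 2 : ℝ) • (M - Mᵀ)

/-- Frobenius norm of a real square matrix. -/
def frobNorm {n : ℕ} (A : Matrix (Fin n) (Fin n) ℝ) : ℝ :=
  Real.sqrt (∑ i, ∑ j, (A i j) ^ 2)

/-- The singular values of `A`: square roots of the eigenvalues of `AᴴA = AᵀA`. -/
def singVals {n : ℕ} (A : Matrix (Fin n) (Fin n) ℝ) : Fin n → ℝ :=
  fun i => Real.sqrt ((Matrix.isHermitian_conjTranspose_mul_self A).eigenvalues i)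

/-- Largest singular value of `A`. -/
def sigmaMax {n : ℕ} (A : Matrix (Fin n) (Fin n) ℝ) : ℝ := ⨆ i, singVals A i

/-- Smallest singular value of `A`. -/
def sigmaMin {n : ℕ} (A : Matrix (Fin n) (Fin n) ℝ) : ℝ := ⨅ i, singVals A i

/-- Spectral norm (largest singular value) of `A`. -/
def specNorm {n : ℕ} (A : Matrix (Fin n) (Fin n) ℝ) : ℝ := sigmaMax A

/-- Riemannian distance on a connected component of `O(n)`:
`dist(X,Y) = min { ‖Ω‖_F : Ω skew-symmetric, X·exp(Ω) = Y }`. -/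
def Odist {n : ℕ} (X Y : Matrix (Fin n) (Fin n) ℝ) : ℝ :=
  sInf {d : ℝ | ∃ Ω : Matrix (Fin n) (Fin n) ℝ, Ωᵀ = -Ω ∧ X * mexp Ω = Y ∧ d = frobNorm Ω}

end

/-! Write `C = U Σ Vᵀ` and `W = Vᵀ X U`, which is orthogonal; then `Tr (C X) = Tr (Σ W)` and
`‖skew (Xᵀ Cᵀ)‖_F = ‖skew (Σ W)‖_F`. For `R = 1 - W`, orthogonality gives `R Rᵀ = R + Rᵀ`, so the
gap `s(C) - Tr (Σ W) = Tr (Σ R)` equals `½ ∑ᵢ σᵢ ‖rowᵢ R‖²`. As `Σ` is symmetric,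
`skew (Σ W) = -skew (Σ R)`, and taking the skew part does not increase the Frobenius norm, so
`‖skew (Σ W)‖² ≤ ‖Σ R‖² = ∑ᵢ σᵢ² ‖rowᵢ R‖² ≤ σmax ∑ᵢ σᵢ ‖rowᵢ R‖² = 2 σmax Tr (Σ R)`. -/

lemma exists_orthogonal_eq_mul_diagonal_of_transpose_mul_self {ι : Type*} [Fintype ι]
    [DecidableEq ι] {B : Matrix ι ι ℝ} {s : ι → ℝ} (hB : Bᵀ * B = diagonal fun i => s i ^ 2) :
    ∃ U : Matrix ι ι ℝ, Uᵀ * U = 1 ∧ B = U * diagonal s := by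
  -- The columns of `B` are orthogonal with norms `|s i|`: normalise those with `s i ≠ 0` and
  -- extend them to an orthonormal basis, the columns of `U`.
  have hcol (i j : ι) : ∑ k, B k i * B k j = if i = j then s i ^ 2 else 0 := by
    simpa [mul_apply, diagonal_apply] using congr_fun (congr_fun hB i) j
  let u (i : ι) : EuclideanSpace ℝ ι := WithLp.toLp 2 fun k => (s i)⁻¹ * B k i
  have hu : Orthonormal ℝ ({i | s i ≠ 0}.domRestrict u) := by
    rw [orthonormal_iff_ite]
    rintro ⟨i, hi⟩ ⟨j, -⟩
    have : inner ℝ (u i) (u j) = (s i)⁻¹ * (s j)⁻¹ * ∑ k, B k i * B k j := by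
      simp only [u, EuclideanSpace.inner_toLp_toLp, dotProduct, star_trivial, Finset.mul_sum]
      exact Finset.sum_congr rfl fun k _ => by ring
    simp only [Set.domRestrict_apply, this, hcol, Subtype.mk.injEq]
    split_ifs with h
    · subst h
      have : s i ≠ 0 := hi
      field_simp
    · simp
  obtain ⟨b, hb⟩ := hu.exists_orthonormalBasis_extension_of_card_eq (by simp)
  refine ⟨of fun k i => b i k, ?_, ?_⟩
  · ext i j
    simpa [mul_apply, one_apply, PiLp.inner_apply, mul_comm] using
      orthonormal_iff_ite.mp b.orthonormal i j
  · ext k i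
    rw [mul_diagonal]
    by_cases hi : s i = 0
    · have hBi : ∑ k, B k i * B k i = 0 := by simpa [hi] using hcol i i
      simp [hi, (Finset.sum_mul_self_eq_zero_iff _ _).mp hBi k (Finset.mem_univ k)]
    · simp [hb i hi, u]
      field_simp

lemma exists_svd {n : ℕ} (C : Matrix (Fin n) (Fin n) ℝ) :
    ∃ U V : Matrix (Fin n) (Fin n) ℝ, Uᵀ * U = 1 ∧ Vᵀ * V = 1 ∧
      C = U * diagonal (singVals C) * Vᵀ := by
  have hH := isHermitian_conjTranspose_mul_self C
  set V : Matrix (Fin n) (Fin n) ℝ := (hH.eigenvectorUnitary : Matrix (Fin n) (Fin n) ℝ)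
  have hV : Vᵀ * V = 1 := by
    simpa [V, star_eq_conjTranspose] using Unitary.coe_star_mul_self hH.eigenvectorUnitary
  have hdiag : (C * V)ᵀ * (C * V) = diagonal fun i => singVals C i ^ 2 := by
    have hsq : (fun i => singVals C i ^ 2) = hH.eigenvalues :=
      funext fun i => Real.sq_sqrt (eigenvalues_conjTranspose_mul_self_nonneg C i)
    have := hH.conjStarAlgAut_star_eigenvectorUnitary
    simp only [Unitary.conjStarAlgAut_star_apply, RCLike.ofReal_real_eq_id,
      Function.id_comp] at this
    rw [hsq, ← this]
    simp [V, star_eq_conjTranspose, Matrix.mul_assoc]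
  obtain ⟨U, hU, hCV⟩ := exists_orthogonal_eq_mul_diagonal_of_transpose_mul_self hdiag
  refine ⟨U, V, hU, hV, ?_⟩
  rw [← hCV, Matrix.mul_assoc, mul_eq_one_comm.mp hV, Matrix.mul_one]

section Trace

variable {ι : Type*} [Fintype ι] [DecidableEq ι]

lemma trace_conj_of_transpose_mul_self_eq_one {U : Matrix ι ι ℝ} (hU : Uᵀ * U = 1)
    (A : Matrix ι ι ℝ) : trace (U * A * Uᵀ) = trace A := by
  rw [trace_mul_cycle, hU, Matrix.one_mul]

lemma two_mul_trace_diagonal_mul_one_sub {W : Matrix ι ι ℝ} (hW : W * Wᵀ = 1) (s : ι → ℝ) :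
    2 * trace (diagonal s * (1 - W)) = ∑ i, ∑ j, s i * (1 - W) i j ^ 2 := by
  set R := 1 - W
  have hRR : R * Rᵀ = R + Rᵀ := by
    simp only [R, transpose_sub, transpose_one, Matrix.sub_mul, Matrix.mul_sub,
      Matrix.mul_one, Matrix.one_mul, hW]
    abel
  have hRt : trace (diagonal s * Rᵀ) = trace (diagonal s * R) := by
    rw [← trace_transpose, transpose_mul, transpose_transpose, diagonal_transpose, trace_mul_comm]
  calc 2 * trace (diagonal s * R) = trace (diagonal s * (R * Rᵀ)) := by
        rw [hRR, Matrix.mul_add, trace_add, hRt, two_mul]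
    _ = ∑ i, ∑ j, s i * R i j ^ 2 := by
        simp only [trace, diag_apply, diagonal_mul]
        simp only [mul_apply, transpose_apply, sq, Finset.mul_sum]

lemma trace_diagonal_mul_one_sub_nonneg {W : Matrix ι ι ℝ} (hW : W * Wᵀ = 1) {s : ι → ℝ}
    (hs : ∀ i, 0 ≤ s i) : 0 ≤ trace (diagonal s * (1 - W)) := by
  have := two_mul_trace_diagonal_mul_one_sub hW s
  have : 0 ≤ ∑ i, ∑ j, s i * (1 - W) i j ^ 2 :=
    Finset.sum_nonneg fun i _ => Finset.sum_nonneg fun j _ => mul_nonneg (hs i) (sq_nonneg _)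
  linarith

end Trace

section FrobeniusNorm

variable {n : ℕ}

lemma frobNorm_sq (A : Matrix (Fin n) (Fin n) ℝ) : frobNorm A ^ 2 = ∑ i, ∑ j, A i j ^ 2 :=
  Real.sq_sqrt (by positivity)

lemma frobNorm_neg (A : Matrix (Fin n) (Fin n) ℝ) : frobNorm (-A) = frobNorm A := by
  simp [frobNorm]

lemma frobNorm_eq_sqrt_trace (A : Matrix (Fin n) (Fin n) ℝ) :
    frobNorm A = √(trace (Aᵀ * A)) := by
  simp only [frobNorm, trace, diag, mul_apply, transpose_apply, sq]
  rw [Finset.sum_comm]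

lemma frobNorm_conj_of_transpose_mul_self_eq_one {U : Matrix (Fin n) (Fin n) ℝ}
    (hU : Uᵀ * U = 1) (A : Matrix (Fin n) (Fin n) ℝ) : frobNorm (U * A * Uᵀ) = frobNorm A := by
  rw [frobNorm_eq_sqrt_trace, frobNorm_eq_sqrt_trace]
  congr 1
  calc trace ((U * A * Uᵀ)ᵀ * (U * A * Uᵀ)) = trace (U * (Aᵀ * (Uᵀ * U) * A) * Uᵀ) := by
        simp only [transpose_mul, transpose_transpose, Matrix.mul_assoc]
    _ = trace (Aᵀ * A) := by
        rw [trace_conj_of_transpose_mul_self_eq_one hU, hU, Matrix.mul_one]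

lemma skewPart_transpose (M : Matrix (Fin n) (Fin n) ℝ) : skewPart Mᵀ = -skewPart M := by
  rw [skewPart, skewPart, transpose_transpose, ← smul_neg, neg_sub]

lemma skewPart_conj (U M : Matrix (Fin n) (Fin n) ℝ) :
    skewPart (U * M * Uᵀ) = U * skewPart M * Uᵀ := by
  simp only [skewPart, transpose_mul, transpose_transpose, Matrix.mul_smul, Matrix.smul_mul,
    Matrix.mul_sub, Matrix.sub_mul, Matrix.mul_assoc]

lemma frobNorm_skewPart_le (M : Matrix (Fin n) (Fin n) ℝ) :
    frobNorm (skewPart M) ≤ frobNorm M := by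
  refine Real.sqrt_le_sqrt ?_
  calc ∑ i, ∑ j, skewPart M i j ^ 2 ≤ ∑ i, ∑ j, (M i j ^ 2 + M j i ^ 2) / 2 := by
        gcongr with i _ j _
        simp only [skewPart, Matrix.smul_apply, Matrix.sub_apply, transpose_apply, smul_eq_mul]
        nlinarith [sq_nonneg (M i j + M j i)]
    _ = ∑ i, ∑ j, M i j ^ 2 := by
        simp only [add_div, Finset.sum_add_distrib]
        rw [Finset.sum_comm (f := fun i j => M j i ^ 2 / 2), ← Finset.sum_add_distrib]
        simp_rw [← Finset.sum_add_distrib, add_halves]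

lemma frobNorm_skewPart_diagonal_mul_sq_le {s : Fin n → ℝ} {σ : ℝ}
    (hs : ∀ i, 0 ≤ s i) (hsσ : ∀ i, s i ≤ σ) {W : Matrix (Fin n) (Fin n) ℝ} (hW : W * Wᵀ = 1) :
    frobNorm (skewPart (diagonal s * W)) ^ 2 ≤ 2 * σ * trace (diagonal s * (1 - W)) := by
  have hskew : skewPart (diagonal s * W) = -skewPart (diagonal s * (1 - W)) := by
    simp only [skewPart, Matrix.mul_sub, Matrix.mul_one, transpose_sub, diagonal_transpose]
    module
  calc frobNorm (skewPart (diagonal s * W)) ^ 2 ≤ frobNorm (diagonal s * (1 - W)) ^ 2 := by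
        rw [hskew, frobNorm_neg]
        exact pow_le_pow_left₀ (Real.sqrt_nonneg _) (frobNorm_skewPart_le _) 2
    _ = ∑ i, ∑ j, s i * (s i * (1 - W) i j ^ 2) := by
        simp only [frobNorm_sq, diagonal_mul, mul_pow]
        ring_nf
    _ ≤ ∑ i, ∑ j, σ * (s i * (1 - W) i j ^ 2) := by
        gcongr with i _ j _
        · exact mul_nonneg (hs i) (sq_nonneg _)
        · exact hsσ i
    _ = 2 * σ * trace (diagonal s * (1 - W)) := by
        rw [mul_comm 2, mul_assoc, two_mul_trace_diagonal_mul_one_sub hW]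
        simp only [Finset.mul_sum]

lemma one_div_two_mul_mul_frobNorm_skewPart_diagonal_mul_sq_le {s : Fin n → ℝ} {σ : ℝ}
    (hσ : 0 ≤ σ) (hs : ∀ i, 0 ≤ s i) (hsσ : ∀ i, s i ≤ σ) {W : Matrix (Fin n) (Fin n) ℝ}
    (hW : W * Wᵀ = 1) :
    1 / (2 * σ) * frobNorm (skewPart (diagonal s * W)) ^ 2 ≤ trace (diagonal s * (1 - W)) := by
  rcases hσ.eq_or_lt with rfl | hσ
  · -- `1 / 0 = 0`, so only the nonnegativity of the gap is left.
    simpa using trace_diagonal_mul_one_sub_nonneg hW hs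
  · rw [one_div, inv_mul_le_iff₀ (by positivity)]
    exact frobNorm_skewPart_diagonal_mul_sq_le hs hsσ hW

end FrobeniusNorm

theorem procrustes_gradient_gap_general {n : ℕ}
    (C : Matrix (Fin n) (Fin n) ℝ) :
    ∀ X : Matrix (Fin n) (Fin n) ℝ, Xᵀ * X = 1 →
      (∑ i, singVals C i) - (C * X).trace ≥
        (1 / (2 * sigmaMax C)) * frobNorm (skewPart (Xᵀ * Cᵀ)) ^ 2 := by
  intro X hX
  obtain ⟨U, V, hU, hV, hC⟩ := exists_svd C
  set W := Vᵀ * X * U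
  have hW : W * Wᵀ = 1 :=
    calc W * Wᵀ = Vᵀ * (X * (U * Uᵀ) * Xᵀ) * V := by
          simp only [W, transpose_mul, transpose_transpose, Matrix.mul_assoc]
      _ = 1 := by
          rw [mul_eq_one_comm.mp hU, Matrix.mul_one, mul_eq_one_comm.mp hX, Matrix.mul_one, hV]
  have hCX : C * X = U * (diagonal (singVals C) * W) * Uᵀ :=
    calc C * X = U * diagonal (singVals C) * Vᵀ * X * (U * Uᵀ) := by
          rw [mul_eq_one_comm.mp hU, Matrix.mul_one, ← hC]
      _ = U * (diagonal (singVals C) * W) * Uᵀ := by simp only [W, Matrix.mul_assoc]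
  have hgap : ∑ i, singVals C i - trace (C * X) = trace (diagonal (singVals C) * (1 - W)) := by
    rw [hCX, trace_conj_of_transpose_mul_self_eq_one hU, Matrix.mul_sub, Matrix.mul_one,
      trace_sub, trace_diagonal]
  have hskew :
      frobNorm (skewPart (Xᵀ * Cᵀ)) = frobNorm (skewPart (diagonal (singVals C) * W)) := by
    rw [← transpose_mul, skewPart_transpose, frobNorm_neg, hCX, skewPart_conj,
      frobNorm_conj_of_transpose_mul_self_eq_one hU]
  have hs : ∀ i, 0 ≤ singVals C i := fun i => Real.sqrt_nonneg _
  have hsσ : ∀ i, singVals C i ≤ sigmaMax C := le_ciSup (Set.finite_range _).bddAbove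
  rw [hgap, hskew, ge_iff_le]
  exact one_div_two_mul_mul_frobNorm_skewPart_diagonal_mul_sq_le (Real.iSup_nonneg hs) hs hsσ hW

/-- gradient-gap inequality. `∑ singVals C` is the sum of the
singular values of `C`, i.e. the maximum of `Tr(CX)` over `O(n)`. -/
theorem procrustes_gradient_gap {n : ℕ}
    (C : Matrix (Fin n) (Fin n) ℝ) (hC : C ≠ 0) :
    ∀ X : Matrix (Fin n) (Fin n) ℝ, Xᵀ * X = 1 →
      (∑ i, singVals C i) - (C * X).trace ≥
        (1 / (2 * sigmaMax C)) * frobNorm (skewPart (Xᵀ * Cᵀ)) ^ 2 :=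
  procrustes_gradient_gap_general C
end

section
/- (Solution of the orthogonal Procrustes problem) Let C be a real n×n matrix with singular value decomposition C = UΣVᵀ (U, V orthogonal, Σ diagonal with nonnegative entries). Then for every X ∈ O(n), Tr(C X) ≤ Tr(Σ), and equality holds for X = VUᵀ. Consequently X_* := VUᵀ is a global minimizer of f(X) := −Tr(CX) over O(n), with minimum value f_* = −Tr(Σ), the negative of the sum of the singular values of C. -/
/-! The substitution `W = Vᵀ X U` turns `Tr(C X)` into `Tr(S W)` with `W` orthogonal again; an
orthogonal matrix has diagonal entries at most `1`, so with `S` diagonal and nonnegative,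
`Tr(S W) = ∑ Sᵢᵢ Wᵢᵢ ≤ ∑ Sᵢᵢ`, and `X = V Uᵀ` gives `W = 1`. -/

open Matrix

namespace Matrix

theorem trace_mul_mul_mul_eq_trace_mul_mul_mul {ι R : Type*} [Fintype ι] [CommSemiring R]
    (A S B X : Matrix ι ι R) : (A * S * B * X).trace = (S * (B * X * A)).trace := by
  rw [Matrix.mul_assoc, Matrix.mul_assoc, trace_mul_comm, Matrix.mul_assoc, Matrix.mul_assoc]

variable {ι : Type*} [Fintype ι] [DecidableEq ι]

theorem mem_unitaryGroup_real_iff {A : Matrix ι ι ℝ} : A ∈ unitaryGroup ι ℝ ↔ A * Aᵀ = 1 := by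
  rw [mem_unitaryGroup_iff, star_eq_conjTranspose, conjTranspose_eq_transpose_of_trivial]

theorem mem_unitaryGroup_real_iff' {A : Matrix ι ι ℝ} : A ∈ unitaryGroup ι ℝ ↔ Aᵀ * A = 1 := by
  rw [mem_unitaryGroup_iff', star_eq_conjTranspose, conjTranspose_eq_transpose_of_trivial]

theorem diag_le_one_of_mem_unitaryGroup {W : Matrix ι ι ℝ} (hW : W ∈ unitaryGroup ι ℝ) (i : ι) :
    W i i ≤ 1 :=
  (le_abs_self _).trans (entry_norm_bound_of_unitary hW i i)

theorem IsDiag.trace_mul_le_trace_of_mem_unitaryGroup {S W : Matrix ι ι ℝ} (hS : S.IsDiag)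
    (hS₀ : ∀ i, 0 ≤ S i i) (hW : W ∈ unitaryGroup ι ℝ) : (S * W).trace ≤ S.trace := by
  rw [← hS.diagonal_diag, trace_diagonal]
  simp only [trace, diag_apply, diagonal_mul]
  gcongr with i
  exact mul_le_of_le_one_right (hS₀ i) (diag_le_one_of_mem_unitaryGroup hW i)

end Matrix

/-- solution of the orthogonal Procrustes problem. If
`C = U S Vᵀ` is an SVD, then `Tr(CX) ≤ Tr(S)` for all orthogonal `X`, with
equality at `X = V Uᵀ`. -/
theorem procrustes_solution {n : ℕ}
    (C U S V : Matrix (Fin n) (Fin n) ℝ)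
    (hU : Uᵀ * U = 1) (hV : Vᵀ * V = 1)
    (hSdiag : S.IsDiag) (hSnn : ∀ i, 0 ≤ S i i)
    (hSVD : C = U * S * Vᵀ) :
    (∀ X : Matrix (Fin n) (Fin n) ℝ, Xᵀ * X = 1 → (C * X).trace ≤ S.trace) ∧
      (C * (V * Uᵀ)).trace = S.trace := by
  have hU' : U ∈ unitaryGroup (Fin n) ℝ := mem_unitaryGroup_real_iff'.mpr hU
  have hVt : Vᵀ ∈ unitaryGroup (Fin n) ℝ := by
    rw [mem_unitaryGroup_real_iff, transpose_transpose]
    exact hV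
  subst hSVD
  refine ⟨fun X hX => ?_, ?_⟩
  · rw [trace_mul_mul_mul_eq_trace_mul_mul_mul]
    exact hSdiag.trace_mul_le_trace_of_mem_unitaryGroup hSnn
      (mul_mem (mul_mem hVt (mem_unitaryGroup_real_iff'.mpr hX)) hU')
  · rw [trace_mul_mul_mul_eq_trace_mul_mul_mul, ← Matrix.mul_assoc Vᵀ, hV, Matrix.one_mul, hU,
      Matrix.mul_one]
end
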